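/- arXiv:2011.04018 — 3 statements merged into one kernel-verified Lean document; each statement's English description precedes it below -/
import Mathlib

section
/- Let q and ε be real numbers with 0 < q ≤ 1/2 and −q/2 ≤ ε ≤ 1 − 2q. Then q·log(q/(q+ε)) + (1−q)·log((1−q)/(1−q−ε)) ≤ 2ε²/q. -/
/-!
The first term is `-q log (1 + ε/q)`, and since `ε/q ≥ -1/2` the second-order bound
`log (1 + u) ≥ u - u²` makes it at most `-ε + ε²/q`. By `log x ≤ x - 1` the second term is at
most `ε + ε²/(1-q-ε)`, and `1 - q - ε ≥ q`. The linear terms cancel.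
-/

open Real

lemma sub_sq_le_log_one_add {u : ℝ} (hu : -(1 / 2) ≤ u) : u - u ^ 2 ≤ log (1 + u) := by
  rcases le_or_gt 0 u with hu0 | hu0
  · calc u - u ^ 2 ≤ 2 * u / (u + 2) := by rw [le_div_iff₀ (by linarith)]; nlinarith
      _ ≤ log (1 + u) := le_log_one_add_of_nonneg hu0
  · have hu_abs : |u| ≤ 1 / 2 := abs_le.2 ⟨hu, by linarith⟩
    -- The remainder bound `‖z‖² / (2 (1 - ‖z‖))` is available for the complex logarithm.
    have htaylor := Complex.norm_log_one_add_sub_self_le (z := u)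
      (by rw [Complex.norm_real, norm_eq_abs]; linarith)
    rw [← Complex.ofReal_one, ← Complex.ofReal_add, ← Complex.ofReal_log (by linarith),
      ← Complex.ofReal_sub] at htaylor
    simp only [Complex.norm_real, norm_eq_abs, sq_abs] at htaylor
    have hrem : u ^ 2 * (1 - |u|)⁻¹ / 2 ≤ u ^ 2 := by
      have : (1 - |u|)⁻¹ ≤ 2 := by rw [inv_le_comm₀ (by linarith) two_pos]; linarith
      calc u ^ 2 * (1 - |u|)⁻¹ / 2 ≤ u ^ 2 * 2 / 2 := by gcongr
        _ = u ^ 2 := by ring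
    linarith [(abs_le.1 (htaylor.trans hrem)).1]

lemma mul_log_div_add_le {a x : ℝ} (ha : 0 < a) (hx : -(a / 2) ≤ x) :
    a * log (a / (a + x)) ≤ -x + x ^ 2 / a := by
  have hlog : log (a / (a + x)) = -log (1 + x / a) := by
    rw [← log_inv]; congr 1; field_simp
  have hu : -(1 / 2) ≤ x / a := by rw [le_div_iff₀ ha]; linarith
  calc a * log (a / (a + x)) ≤ a * -(x / a - (x / a) ^ 2) := by
        rw [hlog]; gcongr; exact sub_sq_le_log_one_add hu
    _ = -x + x ^ 2 / a := by field_simp; ring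

lemma mul_log_div_le {a b : ℝ} (ha : 0 ≤ a) (hb : 0 < b) :
    a * log (a / b) ≤ a * (a - b) / b := by
  rcases ha.eq_or_lt with rfl | ha
  · simp
  calc a * log (a / b) ≤ a * (a / b - 1) := by gcongr; exact log_le_sub_one_of_pos (by positivity)
    _ = a * (a - b) / b := by field_simp

theorem bernoulli_kl_le_general (q ε : ℝ) (hq0 : 0 < q)
    (hε1 : -q / 2 ≤ ε) (hε2 : ε ≤ 1 - 2 * q) :
    q * Real.log (q / (q + ε)) + (1 - q) * Real.log ((1 - q) / (1 - q - ε)) ≤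
      2 * ε ^ 2 / q := by
  have hfirst : q * log (q / (q + ε)) ≤ -ε + ε ^ 2 / q :=
    mul_log_div_add_le hq0 (by linarith)
  have hb : 0 < 1 - q - ε := by linarith
  have hsecond : (1 - q) * log ((1 - q) / (1 - q - ε)) ≤ ε + ε ^ 2 / (1 - q - ε) := by
    calc (1 - q) * log ((1 - q) / (1 - q - ε))
        ≤ (1 - q) * ((1 - q) - (1 - q - ε)) / (1 - q - ε) :=
          mul_log_div_le (by linarith) hb
      _ = ε + ε ^ 2 / (1 - q - ε) := by field_simp; ring
  have hdenom : ε ^ 2 / (1 - q - ε) ≤ ε ^ 2 / q := by gcongr; linarith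
  calc _ ≤ ε ^ 2 / q + ε ^ 2 / q := by linarith
    _ = 2 * ε ^ 2 / q := by ring

/-- Bernoulli KL divergence inequality (Lemma 20 of Jaksch et al.):
for `0 < q ≤ 1/2` and `-q/2 ≤ ε ≤ 1 - 2q`,
`q·log(q/(q+ε)) + (1−q)·log((1−q)/(1−q−ε)) ≤ 2ε²/q`. -/
theorem bernoulli_kl_le (q ε : ℝ) (hq0 : 0 < q) (hq : q ≤ 1 / 2)
    (hε1 : -q / 2 ≤ ε) (hε2 : ε ≤ 1 - 2 * q) :
    q * Real.log (q / (q + ε)) + (1 - q) * Real.log ((1 - q) / (1 - q - ε)) ≤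
      2 * ε ^ 2 / q :=
  bernoulli_kl_le_general q ε hq0 hε1 hε2
end

section
/- Let Σ_0 and Σ_1 be positive semi-definite d×d real matrices, let s ≥ 1 be an integer, and suppose the restricted minimum eigenvalue satisfies C_min(Σ_0, s) > 0 and that the entrywise maximum norm satisfies ‖Σ_1 − Σ_0‖_∞ ≤ C_min(Σ_0, s)/(32s). Then C_min(Σ_1, s) ≥ C_min(Σ_0, s)/2. -/
/-!
Write `Q_k(β) = ∑ᵢⱼ βᵢ (Σ_k)ᵢⱼ βⱼ`. Entrywise closeness gives `|Q₁(β) - Q₀(β)| ≤ ε ‖β‖₁²`.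
On the cone `‖β_{Sᶜ}‖₁ ≤ 3‖β_S‖₁` we have `‖β‖₁ ≤ 4‖β_S‖₁`, and Cauchy–Schwarz on `S` gives
`‖β‖₁² ≤ 16 s ‖β_S‖₂²`. With `ε = C_min(Σ₀, s)/(32 s)` this yields
`Q₁(β) ≥ Q₀(β) - C_min(Σ₀, s)/2 · ‖β_S‖₂² ≥ C_min(Σ₀, s)/2 · ‖β_S‖₂²`.
-/

open Finset

/-- Restriction of a vector to the coordinates in `S` (zero elsewhere). -/
def restrictVec {d : ℕ} (S : Finset (Fin d)) (β : Fin d → ℝ) : Fin d → ℝ :=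
  fun j => if j ∈ S then β j else 0

/-- ℓ1 norm of a vector in ℝ^d. -/
def l1Norm {d : ℕ} (v : Fin d → ℝ) : ℝ := ∑ j, |v j|

/-- squared ℓ2 norm of a vector in ℝ^d. -/
def l2NormSq {d : ℕ} (v : Fin d → ℝ) : ℝ := ∑ j, (v j) ^ 2

/-- Restricted minimum eigenvalue `C_min(Z, s)`: the infimum, over subsets `S ⊆ [d]` with
`|S| ≤ s` and vectors `β` with `β_S ≠ 0` and `‖β_{Sᶜ}‖₁ ≤ 3‖β_S‖₁`, of
`⟨β, Zβ⟩ / ‖β_S‖₂²`. -/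
noncomputable def Cmin {d : ℕ} (Z : Matrix (Fin d) (Fin d) ℝ) (s : ℕ) : ℝ :=
  sInf {c : ℝ | ∃ S : Finset (Fin d), S.card ≤ s ∧ ∃ β : Fin d → ℝ,
    restrictVec S β ≠ 0 ∧ l1Norm (restrictVec Sᶜ β) ≤ 3 * l1Norm (restrictVec S β) ∧
    c = (∑ i, ∑ j, β i * Z i j * β j) / l2NormSq (restrictVec S β)}

lemma abs_quadForm_sub_le {ι : Type*} [Fintype ι] {A B : Matrix ι ι ℝ} {ε : ℝ}
    (hAB : ∀ i j, |A i j - B i j| ≤ ε) (β : ι → ℝ) :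
    |∑ i, ∑ j, β i * A i j * β j - ∑ i, ∑ j, β i * B i j * β j| ≤ ε * (∑ i, |β i|) ^ 2 :=
  calc |∑ i, ∑ j, β i * A i j * β j - ∑ i, ∑ j, β i * B i j * β j|
      = |∑ i, ∑ j, β i * (A i j - B i j) * β j| := by
        simp only [mul_sub, sub_mul, sum_sub_distrib]
    _ ≤ ∑ i, ∑ j, |β i * (A i j - B i j) * β j| :=
        (abs_sum_le_sum_abs _ _).trans (sum_le_sum fun i _ => abs_sum_le_sum_abs _ _)
    _ ≤ ∑ i, ∑ j, |β i| * ε * |β j| := by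
        gcongr with i _ j _
        rw [abs_mul, abs_mul]
        gcongr
        exact hAB i j
    _ = ε * (∑ i, |β i|) ^ 2 := by
        rw [sq, sum_mul_sum, mul_sum]
        simp only [mul_sum]
        exact sum_congr rfl fun i _ => sum_congr rfl fun j _ => by ring

section RestrictVec

variable {d : ℕ}

lemma l1Norm_restrictVec (S : Finset (Fin d)) (β : Fin d → ℝ) :
    l1Norm (restrictVec S β) = ∑ j ∈ S, |β j| := by
  simp [l1Norm, restrictVec, apply_ite abs, sum_ite_mem]

lemma l2NormSq_restrictVec (S : Finset (Fin d)) (β : Fin d → ℝ) :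
    l2NormSq (restrictVec S β) = ∑ j ∈ S, β j ^ 2 := by
  simp [l2NormSq, restrictVec, apply_ite (· ^ 2), sum_ite_mem]

lemma l2NormSq_pos {v : Fin d → ℝ} (hv : v ≠ 0) : 0 < l2NormSq v := by
  obtain ⟨j, hj⟩ := Function.ne_iff.mp hv
  exact sum_pos' (fun i _ => sq_nonneg (v i)) ⟨j, mem_univ j, sq_pos_of_ne_zero hj⟩

lemma sum_abs_le_four_mul_of_cone {S : Finset (Fin d)} {β : Fin d → ℝ}
    (hcone : l1Norm (restrictVec Sᶜ β) ≤ 3 * l1Norm (restrictVec S β)) :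
    ∑ j, |β j| ≤ 4 * ∑ j ∈ S, |β j| := by
  rw [l1Norm_restrictVec, l1Norm_restrictVec] at hcone
  rw [← sum_add_sum_compl S]
  linarith

lemma sq_sum_abs_le_of_cone {s : ℕ} {S : Finset (Fin d)} {β : Fin d → ℝ} (hS : S.card ≤ s)
    (hcone : l1Norm (restrictVec Sᶜ β) ≤ 3 * l1Norm (restrictVec S β)) :
    (∑ j, |β j|) ^ 2 ≤ 16 * s * l2NormSq (restrictVec S β) :=
  calc (∑ j, |β j|) ^ 2 ≤ (4 * ∑ j ∈ S, |β j|) ^ 2 := by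
        gcongr
        exact sum_abs_le_four_mul_of_cone hcone
    _ = 16 * (∑ j ∈ S, |β j|) ^ 2 := by ring
    _ ≤ 16 * (S.card * ∑ j ∈ S, |β j| ^ 2) := by gcongr; exact sq_sum_le_card_mul_sum_sq
    _ ≤ 16 * s * l2NormSq (restrictVec S β) := by
        rw [l2NormSq_restrictVec, mul_assoc]
        simp only [sq_abs]
        gcongr

end RestrictVec

section Cmin

variable {d : ℕ} {Z : Matrix (Fin d) (Fin d) ℝ} {s : ℕ}

-- `sInf` of a set of reals is `0` when the set is empty or unbounded below.
lemma nonempty_and_bddBelow_of_cmin_ne_zero (h : Cmin Z s ≠ 0) :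
    (∃ S : Finset (Fin d), S.card ≤ s ∧ ∃ β : Fin d → ℝ,
      restrictVec S β ≠ 0 ∧ l1Norm (restrictVec Sᶜ β) ≤ 3 * l1Norm (restrictVec S β)) ∧
    BddBelow {c : ℝ | ∃ S : Finset (Fin d), S.card ≤ s ∧ ∃ β : Fin d → ℝ,
      restrictVec S β ≠ 0 ∧ l1Norm (restrictVec Sᶜ β) ≤ 3 * l1Norm (restrictVec S β) ∧
      c = (∑ i, ∑ j, β i * Z i j * β j) / l2NormSq (restrictVec S β)} := by
  refine ⟨?_, ?_⟩
  · by_contra hempty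
    refine h ((congrArg sInf (Set.eq_empty_of_forall_notMem ?_)).trans Real.sInf_empty)
    rintro _ ⟨S, hS, β, hβ, hcone, -⟩
    exact hempty ⟨S, hS, β, hβ, hcone⟩
  · by_contra hbdd
    exact h (Real.sInf_of_not_bddBelow hbdd)

lemma cmin_mul_le_of_ne_zero (h : Cmin Z s ≠ 0) {S : Finset (Fin d)} (hS : S.card ≤ s)
    {β : Fin d → ℝ} (hβ : restrictVec S β ≠ 0)
    (hcone : l1Norm (restrictVec Sᶜ β) ≤ 3 * l1Norm (restrictVec S β)) :
    Cmin Z s * l2NormSq (restrictVec S β) ≤ ∑ i, ∑ j, β i * Z i j * β j :=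
  (le_div_iff₀ (l2NormSq_pos hβ)).1 <|
    csInf_le (nonempty_and_bddBelow_of_cmin_ne_zero h).2 ⟨S, hS, β, hβ, hcone, rfl⟩

lemma le_cmin {c : ℝ}
    (hne : ∃ S : Finset (Fin d), S.card ≤ s ∧ ∃ β : Fin d → ℝ,
      restrictVec S β ≠ 0 ∧ l1Norm (restrictVec Sᶜ β) ≤ 3 * l1Norm (restrictVec S β))
    (h : ∀ S : Finset (Fin d), S.card ≤ s → ∀ β : Fin d → ℝ, restrictVec S β ≠ 0 →
      l1Norm (restrictVec Sᶜ β) ≤ 3 * l1Norm (restrictVec S β) →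
      c * l2NormSq (restrictVec S β) ≤ ∑ i, ∑ j, β i * Z i j * β j) :
    c ≤ Cmin Z s := by
  obtain ⟨S, hS, β, hβ, hcone⟩ := hne
  refine le_csInf ⟨_, S, hS, β, hβ, hcone, rfl⟩ ?_
  rintro _ ⟨S, hS, β, hβ, hcone, rfl⟩
  exact (le_div_iff₀ (l2NormSq_pos hβ)).2 (h S hS β hβ hcone)

end Cmin

theorem cmin_perturbation_general {d : ℕ} (Sigma0 Sigma1 : Matrix (Fin d) (Fin d) ℝ)
    (s : ℕ)
    (hpos : 0 < Cmin Sigma0 s)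
    (hclose : ∀ i j, |Sigma1 i j - Sigma0 i j| ≤ Cmin Sigma0 s / (32 * s)) :
    Cmin Sigma0 s / 2 ≤ Cmin Sigma1 s := by
  set C := Cmin Sigma0 s
  -- `s / s ≤ 1` also covers the junk case `s = 0`
  have hε16s : C / (32 * s) * (16 * s) ≤ C / 2 :=
    calc C / (32 * s) * (16 * s) = C / 2 * (s / s) := by ring
      _ ≤ C / 2 := mul_le_of_le_one_right (by positivity) (div_self_le_one _)
  refine le_cmin (nonempty_and_bddBelow_of_cmin_ne_zero hpos.ne').1 fun S hS β hβ hcone => ?_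
  have hb := (l2NormSq_pos hβ).le
  calc C / 2 * l2NormSq (restrictVec S β)
      ≤ C * l2NormSq (restrictVec S β) - C / (32 * s) * (16 * s * l2NormSq (restrictVec S β)) := by
        linarith [mul_le_mul_of_nonneg_right hε16s hb]
    _ ≤ ∑ i, ∑ j, β i * Sigma0 i j * β j - C / (32 * s) * (∑ j, |β j|) ^ 2 := by
        gcongr
        · exact cmin_mul_le_of_ne_zero hpos.ne' hS hβ hcone
        · exact sq_sum_abs_le_of_cone hS hcone
    _ ≤ ∑ i, ∑ j, β i * Sigma1 i j * β j :=
        sub_le_comm.1 (abs_sub_le_iff.1 (abs_quadForm_sub_le hclose β)).2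

/-- Restricted-eigenvalue perturbation lemma (Corollary 6.8 in Bühlmann–van de Geer):
if `C_min(Sigma0, s) > 0` and `‖Sigma1 − Sigma0‖_∞ ≤ C_min(Sigma0, s)/(32 s)` entrywise, then
`C_min(Sigma1, s) ≥ C_min(Sigma0, s)/2`. -/
theorem cmin_perturbation {d : ℕ} (Sigma0 Sigma1 : Matrix (Fin d) (Fin d) ℝ)
    (h₀ : Sigma0.PosSemidef) (h₁ : Sigma1.PosSemidef)
    (s : ℕ) (hs : 1 ≤ s)
    (hpos : 0 < Cmin Sigma0 s)
    (hclose : ∀ i j, |Sigma1 i j - Sigma0 i j| ≤ Cmin Sigma0 s / (32 * s)) :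
    Cmin Sigma0 s / 2 ≤ Cmin Sigma1 s :=
  cmin_perturbation_general Sigma0 Sigma1 s hpos hclose
end

section
/- Let s ≥ 2 and d ≥ 2s be integers and let S' ⊆ ℝ^d be the set of vectors z with z_j ∈ {−1, 0, 1} for all j, z_j = 0 for j ∈ {1,…,s−1} ∪ {d}, and exactly s−1 nonzero coordinates. Then for every vector φ ∈ ℝ^d with φ_j ∈ {−1, 0, 1} for all j and at most s−1 nonzero coordinates, (1/|S'|)·Σ_{z∈S'} ⟨φ, z⟩² ≤ (s−1)²/(d−s). -/
/-!
Flipping the sign of one coordinate maps `S'` to itself, so the cross terms `∑_{z ∈ S'} z j * z k`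
with `j ≠ k` cancel and `∑_{z ∈ S'} ⟨φ, z⟩²` equals `∑ j, φ j ^ 2 * c j`, where
`c j = ∑_{z ∈ S'} z j ^ 2`. Swapping two of the `d - s` admissible coordinates also maps `S'` to
itself, so `c` is constant on them (and vanishes elsewhere); as every `z ∈ S'` has exactly `s - 1`
entries `±1`, summing gives `c j ≤ (s - 1) |S'| / (d - s)`. Since `φ` has at most `s - 1` entries
`±1`, the bound follows.
-/

open Finset

noncomputable def Sprime (d s : ℕ) : Finset (Fin d → ℝ) := by
  classical
  exact (Fintype.piFinset fun _ : Fin d => ({-1, 0, 1} : Finset ℝ)).filter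
    (fun z => (∀ j : Fin d, (j : ℕ) < s - 1 → z j = 0) ∧
      (∀ j : Fin d, (j : ℕ) = d - 1 → z j = 0) ∧
      (Finset.univ.filter fun j => z j ≠ 0).card = s - 1)

section SignFlip

variable {ι : Type*} [DecidableEq ι] {S : Finset (ι → ℝ)}

theorem sum_mul_apply_eq_zero_of_update_neg_mem {j k : ι} (hjk : j ≠ k)
    (hS : ∀ z ∈ S, Function.update z j (-z j) ∈ S) :
    ∑ z ∈ S, z j * z k = 0 := by
  refine sum_involution (fun z _ => Function.update z j (-z j)) ?_ ?_ (fun z hz => hS z hz) ?_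
  · intro z _
    simp [hjk.symm]
  · intro z _ hz h
    have hzj : z j = -z j := by simpa using (congrFun h j).symm
    exact left_ne_zero_of_mul hz (by linarith)
  · intro z _
    simp

theorem sum_sq_sum_mul_eq_of_update_neg_mem [Fintype ι]
    (hS : ∀ j, ∀ z ∈ S, Function.update z j (-z j) ∈ S) (φ : ι → ℝ) :
    ∑ z ∈ S, (∑ j, φ j * z j) ^ 2 = ∑ j, φ j ^ 2 * ∑ z ∈ S, z j ^ 2 := by
  have hcross : ∀ j k, ∑ z ∈ S, z j * z k = if j = k then ∑ z ∈ S, z j ^ 2 else 0 := by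
    intro j k
    split_ifs with hjk
    · simp [hjk, sq]
    · exact sum_mul_apply_eq_zero_of_update_neg_mem hjk (hS j)
  calc ∑ z ∈ S, (∑ j, φ j * z j) ^ 2
      = ∑ z ∈ S, ∑ j, ∑ k, φ j * φ k * (z j * z k) := by
        refine sum_congr rfl fun z _ => ?_
        rw [sq, sum_mul_sum]
        exact sum_congr rfl fun j _ => sum_congr rfl fun k _ => by ring
    _ = ∑ j, ∑ k, φ j * φ k * ∑ z ∈ S, z j * z k := by
        rw [sum_comm]
        refine sum_congr rfl fun j _ => ?_
        rw [sum_comm]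
        exact sum_congr rfl fun k _ => (mul_sum ..).symm
    _ = ∑ j, φ j ^ 2 * ∑ z ∈ S, z j ^ 2 := by
        simp only [hcross, mul_ite, mul_zero, sum_ite_eq, mem_univ, if_true]
        exact sum_congr rfl fun j _ => by ring

end SignFlip

theorem sum_apply_eq_of_comp_swap_mem {ι α M : Type*} [DecidableEq ι] [AddCommMonoid M]
    {S : Finset (ι → α)} {j k : ι} (hS : ∀ z ∈ S, z ∘ Equiv.swap j k ∈ S) (g : α → M) :
    ∑ z ∈ S, g (z j) = ∑ z ∈ S, g (z k) :=
  sum_nbij' (· ∘ Equiv.swap j k) (· ∘ Equiv.swap j k) hS hS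
    (fun z _ => by ext; simp) (fun z _ => by ext; simp) (fun z _ => by simp)

theorem sum_sq_eq_card_ne_zero {ι : Type*} [Fintype ι] {v : ι → ℝ}
    (hv : ∀ j, v j = -1 ∨ v j = 0 ∨ v j = 1) :
    ∑ j, v j ^ 2 = #{j | v j ≠ 0} := by
  rw [card_filter]
  push_cast
  refine sum_congr rfl fun j _ => ?_
  rcases hv j with h | h | h <;> simp [h]

theorem apply_le_sum_div_card {ι : Type*} [Fintype ι] {c : ι → ℝ} {I : Finset ι}
    (hc : ∀ i, 0 ≤ c i) (hout : ∀ j ∉ I, c j = 0) (hconst : ∀ j ∈ I, ∀ k ∈ I, c j = c k) (j : ι) :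
    c j ≤ (∑ i, c i) / #I := by
  have hsum : ∀ k ∈ I, ∑ i, c i = #I * c k := by
    intro k hk
    rw [← sum_subset (subset_univ I) fun i _ hi => hout i hi,
      sum_congr rfl fun i hi => hconst i hi k hk, sum_const, nsmul_eq_mul]
  by_cases hj : j ∈ I
  · have hI : (0 : ℝ) < #I := by exact_mod_cast card_pos.mpr ⟨j, hj⟩
    rw [hsum j hj, mul_div_cancel_left₀ _ hI.ne']
  · rw [hout j hj]
    exact div_nonneg (sum_nonneg fun i _ => hc i) (Nat.cast_nonneg _)

/-- The paper's coordinates `{s, …, d - 1}`, on which vectors of `S'` may be nonzero, as 0-based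
indices. -/
def SprimeCoords (d s : ℕ) : Finset (Fin d) := {j | s - 1 ≤ (j : ℕ) ∧ (j : ℕ) < d - 1}

theorem card_SprimeCoords {d s : ℕ} (hs : 1 ≤ s) : #(SprimeCoords d s) = d - s := by
  rw [SprimeCoords, ← card_map Fin.valEmbedding,
    show (univ.filter _).map Fin.valEmbedding = Ico (s - 1) (d - 1) by
      ext i
      simp only [mem_map, mem_filter, mem_univ, true_and, Fin.valEmbedding_apply, mem_Ico]
      exact ⟨fun ⟨_, h, hi⟩ => hi ▸ h, fun h => ⟨⟨i, by omega⟩, h, rfl⟩⟩,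
    Nat.card_Ico]
  omega

theorem mem_Sprime_iff {d s : ℕ} {z : Fin d → ℝ} :
    z ∈ Sprime d s ↔ (∀ j, z j = -1 ∨ z j = 0 ∨ z j = 1) ∧
      (∀ j, z j ≠ 0 → j ∈ SprimeCoords d s) ∧ #{j | z j ≠ 0} = s - 1 := by
  simp only [Sprime, mem_filter, Fintype.mem_piFinset, mem_insert, mem_singleton, SprimeCoords,
    mem_univ, true_and]
  constructor
  · rintro ⟨hsign, hlow, hlast, hcard⟩
    refine ⟨hsign, fun j hj => ⟨?_, ?_⟩, hcard⟩
    · by_contra h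
      exact hj (hlow j (by omega))
    · by_contra h
      exact hj (hlast j (by omega))
  · rintro ⟨hsign, hcoords, hcard⟩
    refine ⟨hsign, fun j h => ?_, fun j h => ?_, hcard⟩ <;>
      · by_contra hj
        have := hcoords j hj
        omega

theorem mem_Sprime_of_forall_eq_or_eq_neg {d s : ℕ} {z w : Fin d → ℝ} (σ : Equiv.Perm (Fin d))
    (hσ : ∀ j, σ j ∈ SprimeCoords d s ↔ j ∈ SprimeCoords d s)
    (hw : ∀ j, w j = z (σ j) ∨ w j = -z (σ j)) (hz : z ∈ Sprime d s) : w ∈ Sprime d s := by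
  obtain ⟨hsign, hcoords, hcard⟩ := mem_Sprime_iff.mp hz
  have hne : ∀ j, w j ≠ 0 ↔ z (σ j) ≠ 0 := fun j => by rcases hw j with h | h <;> simp [h]
  refine mem_Sprime_iff.mpr ⟨fun j => ?_, fun j hj => (hσ j).mp (hcoords _ ((hne j).mp hj)), ?_⟩
  · rcases hw j with h | h <;> rcases hsign (σ j) with h' | h' | h' <;> simp [h, h']
  · rw [← hcard]
    exact card_equiv σ fun j => by simp [hne]

theorem update_neg_mem_Sprime {d s : ℕ} {z : Fin d → ℝ} (hz : z ∈ Sprime d s) (j : Fin d) :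
    Function.update z j (-z j) ∈ Sprime d s :=
  mem_Sprime_of_forall_eq_or_eq_neg 1 (fun _ => Iff.rfl)
    (fun k => by rcases eq_or_ne k j with rfl | hk <;> simp [*]) hz

theorem comp_swap_mem_Sprime {d s : ℕ} {z : Fin d → ℝ} (hz : z ∈ Sprime d s) {j k : Fin d}
    (hj : j ∈ SprimeCoords d s) (hk : k ∈ SprimeCoords d s) :
    z ∘ Equiv.swap j k ∈ Sprime d s :=
  mem_Sprime_of_forall_eq_or_eq_neg (Equiv.swap j k)
    (fun i => by rcases eq_or_ne i j with rfl | hij <;> rcases eq_or_ne i k with rfl | hik <;>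
      simp [Equiv.swap_apply_of_ne_of_ne, *])
    (fun _ => Or.inl rfl) hz

theorem sum_sq_apply_Sprime_le {d s : ℕ} (hs : 1 ≤ s) (hsd : s ≤ d) (j : Fin d) :
    ∑ z ∈ Sprime d s, z j ^ 2 ≤ ((s : ℝ) - 1) * #(Sprime d s) / ((d : ℝ) - s) := by
  have htotal : ∑ i, ∑ z ∈ Sprime d s, z i ^ 2 = ((s : ℝ) - 1) * #(Sprime d s) := by
    rw [sum_comm, mul_comm, ← nsmul_eq_mul, ← sum_const]
    refine sum_congr rfl fun z hz => ?_
    obtain ⟨hsign, -, hcard⟩ := mem_Sprime_iff.mp hz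
    rw [sum_sq_eq_card_ne_zero hsign, hcard, Nat.cast_sub hs, Nat.cast_one]
  have hcoords : ((#(SprimeCoords d s) : ℕ) : ℝ) = (d : ℝ) - s := by
    rw [card_SprimeCoords hs, Nat.cast_sub hsd]
  rw [← htotal, ← hcoords]
  refine apply_le_sum_div_card (c := fun i => ∑ z ∈ Sprime d s, z i ^ 2)
    (fun i => sum_nonneg fun z _ => sq_nonneg (z i)) ?_ ?_ j
  · intro i hi
    refine sum_eq_zero fun z hz => ?_
    have : z i = 0 := by
      by_contra h
      exact hi ((mem_Sprime_iff.mp hz).2.1 i h)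
    simp [this]
  · intro i hi k hk
    exact sum_apply_eq_of_comp_swap_mem (fun z hz => comp_swap_mem_Sprime hz hi hk) (· ^ 2)

open Classical in
/-- Averaging bound over `S'`: for any vector `φ` with entries in `{-1,0,1}` and at
most `s-1` nonzero coordinates,
`(1/|S'|)·∑_{z∈S'} ⟨φ, z⟩² ≤ (s−1)²/(d−s)`. -/
theorem Sprime_average_inner_sq_le (d s : ℕ) (hs : 2 ≤ s) (hd : 2 * s ≤ d)
    (φ : Fin d → ℝ) (hφ : ∀ j, φ j = -1 ∨ φ j = 0 ∨ φ j = 1)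
    (hφsparse : (Finset.univ.filter fun j => φ j ≠ 0).card ≤ s - 1) :
    (1 / (Sprime d s).card : ℝ) * ∑ z ∈ Sprime d s, (∑ j, φ j * z j) ^ 2 ≤
      ((s : ℝ) - 1) ^ 2 / ((d : ℝ) - s) := by
  set S := Sprime d s
  set B : ℝ := ((s : ℝ) - 1) * #S / ((d : ℝ) - s)
  have hds : (0 : ℝ) < (d : ℝ) - s := by
    rw [sub_pos]; exact_mod_cast (by omega : s < d)
  have hs1 : (0 : ℝ) ≤ (s : ℝ) - 1 := by
    rw [sub_nonneg]; exact_mod_cast (by omega : 1 ≤ s)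
  have hφsq : ∑ j, φ j ^ 2 ≤ (s : ℝ) - 1 := by
    rw [sum_sq_eq_card_ne_zero hφ, ← Nat.cast_one, ← Nat.cast_sub (by omega)]
    exact_mod_cast hφsparse
  have hsum : ∑ z ∈ S, (∑ j, φ j * z j) ^ 2 ≤ ((s : ℝ) - 1) * B :=
    calc ∑ z ∈ S, (∑ j, φ j * z j) ^ 2 = ∑ j, φ j ^ 2 * ∑ z ∈ S, z j ^ 2 :=
          sum_sq_sum_mul_eq_of_update_neg_mem (fun j z hz => update_neg_mem_Sprime hz j) φ
      _ ≤ ∑ j, φ j ^ 2 * B := by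
          gcongr with j
          exact sum_sq_apply_Sprime_le (by omega) (by omega) j
      _ ≤ ((s : ℝ) - 1) * B := by
          rw [← sum_mul]
          gcongr
  rcases (#S).eq_zero_or_pos with hS | hS
  · simpa [hS] using div_nonneg (sq_nonneg _) hds.le
  · calc (1 / #S : ℝ) * ∑ z ∈ S, (∑ j, φ j * z j) ^ 2 ≤ 1 / #S * (((s : ℝ) - 1) * B) := by
          gcongr
      _ = ((s : ℝ) - 1) ^ 2 / ((d : ℝ) - s) := by
          simp only [B]
          field_simp
end
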